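/- Two rooted binary phylogenetic trees on the same finite taxon set X (with |X| ≥ 3) that display exactly the same set of rooted triples are isomorphic as leaf-labeled rooted trees; i.e., the collection of rooted triples displayed on a rooted binary phylogenetic tree determines the tree. -/
import Mathlib


open Function

/-- A rooted phylogenetic tree on taxon set `X`, with vertex set `V`: there is a root,
every vertex reaches the root by iterating the parent map, the leaves (vertices with no
children) are bijectively labeled by the taxa, and every internal vertex has at least
two children (so the root has degree ≥ 2 and other internal vertices degree ≥ 3). -/
structure RPhylo (X V : Type*) where
  root : V
  parent : V → V
  leaf : X → V
  parent_root : parent root = root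
  reach : ∀ v : V, ∃ n : ℕ, parent^[n] v = root
  leaf_inj : Function.Injective leaf
  leaf_no_child : ∀ (x : X) (w : V), parent w = leaf x → w = leaf x
  leaf_surj : ∀ v : V, (∀ w : V, parent w = v → w = v) → ∃ x : X, leaf x = v
  internal_two : ∀ v : V, ({w | parent w = v ∧ w ≠ v} : Set V) = ∅ ∨
      2 ≤ ({w | parent w = v ∧ w ≠ v} : Set V).ncard

namespace RPhylo

variable {X V : Type*}

/-- The children of a vertex. -/
def children (T : RPhylo X V) (v : V) : Set V := {w | T.parent w = v ∧ w ≠ v}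

/-- A rooted phylogenetic tree is binary if every non-leaf vertex has exactly two
children (root of degree 2, other internal vertices of degree 3). -/
def IsBinary (T : RPhylo X V) : Prop :=
  ∀ v : V, T.children v = ∅ ∨ (T.children v).ncard = 2

/-- `u` is a (weak) ancestor of `v`. -/
def Anc (T : RPhylo X V) (u v : V) : Prop := ∃ n : ℕ, T.parent^[n] v = u

/-- The set of taxa labelling leaf descendants of `v` (a leaf is its own descendant). -/
def clade (T : RPhylo X V) (v : V) : Set X := {x | T.Anc v (T.leaf x)}

/-- `m` is the most recent common ancestor of the set `S` of vertices. -/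
def IsMRCA (T : RPhylo X V) (S : Set V) (m : V) : Prop :=
  (∀ v ∈ S, T.Anc m v) ∧ ∀ a : V, (∀ v ∈ S, T.Anc a v) → T.Anc a m

/-- Weight, under the rooted triple metrization, of the edge from `v` to its parent:
the drop in the number of leaf descendants from parent to child. -/
noncomputable def wRT (T : RPhylo X V) (v : V) : ℕ :=
  (T.clade (T.parent v)).ncard - (T.clade v).ncard

/-- Sum of the weights (under the weighting `w`, where `w v` is the weight of the
edge from `v` to its parent) of the first `n` edges on the path from `v` toward the root. -/
def upSum (T : RPhylo X V) (w : V → ℕ) : V → ℕ → ℕ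
  | _, 0 => 0
  | v, n + 1 => w v + T.upSum w (T.parent v) n

/-- `T` displays the rooted triple `ab|c`: the MRCA of `a,b` is a proper descendant of
the MRCA of `a,b,c`. -/
def DisplaysTriple (T : RPhylo X V) (a b c : X) : Prop :=
  ∃ m₁ m₂ : V, T.IsMRCA {T.leaf a, T.leaf b} m₁ ∧
    T.IsMRCA {T.leaf a, T.leaf b, T.leaf c} m₂ ∧ m₁ ≠ m₂ ∧ T.Anc m₂ m₁

/-- `T` displays the degenerate (star) rooted triple `abc`: the induced tree on
`{a,b,c}` is unresolved, i.e. all three pairwise MRCAs coincide. -/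
def DisplaysStarTriple (T : RPhylo X V) (a b c : X) : Prop :=
  ∃ m : V, T.IsMRCA {T.leaf a, T.leaf b} m ∧ T.IsMRCA {T.leaf a, T.leaf c} m ∧
    T.IsMRCA {T.leaf b, T.leaf c} m

end RPhylo

namespace RPhylo

variable {X V : Type*} (T : RPhylo X V)

-- ### basic lemmas

lemma anc_refl (v : V) : T.Anc v v := ⟨0, rfl⟩

lemma anc_trans {u v w : V} (h1 : T.Anc u v) (h2 : T.Anc v w) : T.Anc u w := by
  obtain ⟨n, hn⟩ := h1; obtain ⟨m, hm⟩ := h2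
  exact ⟨n + m, by rw [Function.iterate_add_apply, hm, hn]⟩

lemma iterate_root (n : ℕ) : T.parent^[n] T.root = T.root :=
  Function.iterate_fixed T.parent_root n

noncomputable def depth (T : RPhylo X V) (v : V) : ℕ :=
  sInf {n | T.parent^[n] v = T.root}

lemma depth_spec (v : V) : T.parent^[T.depth v] v = T.root :=
  Nat.sInf_mem (T.reach v)

lemma depth_le {v : V} {k : ℕ} (h : T.parent^[k] v = T.root) : T.depth v ≤ k :=
  Nat.sInf_le h

lemma iterate_root_of_le {v : V} {n : ℕ} (h : T.depth v ≤ n) : T.parent^[n] v = T.root := by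
  rw [show n = (n - T.depth v) + T.depth v by omega, Function.iterate_add_apply,
    T.depth_spec, T.iterate_root]

lemma eq_root_of_iterate_fixed {v : V} {d : ℕ} (h : T.parent^[d] v = v) (hd : d ≠ 0) :
    v = T.root := by
  have key : ∀ k, T.parent^[k * d] v = v := by
    intro k; induction k with
    | zero => simp
    | succ k ih => rw [Nat.succ_mul, Function.iterate_add_apply, h, ih]
  have := key (T.depth v)
  rw [T.iterate_root_of_le (by nlinarith [Nat.one_le_iff_ne_zero.2 hd])] at this
  exact this.symm

lemma eq_root_of_parent_fixed {v : V} (h : T.parent v = v) : v = T.root :=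
  T.eq_root_of_iterate_fixed (d := 1) h one_ne_zero

lemma anc_antisymm {u v : V} (h1 : T.Anc u v) (h2 : T.Anc v u) : u = v := by
  obtain ⟨n, hn⟩ := h1; obtain ⟨m, hm⟩ := h2
  rcases Nat.eq_zero_or_pos (m + n) with h | h
  · obtain ⟨rfl, rfl⟩ : m = 0 ∧ n = 0 := by omega
    exact hn.symm
  · have hfix : T.parent^[m + n] v = v := by
      rw [Function.iterate_add_apply, hn, hm]
    have hv := T.eq_root_of_iterate_fixed hfix (by omega)
    subst hv
    rw [← hn, T.iterate_root]

lemma anc_total {u v w : V} (h1 : T.Anc u w) (h2 : T.Anc v w) :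
    T.Anc u v ∨ T.Anc v u := by
  obtain ⟨n, hn⟩ := h1; obtain ⟨m, hm⟩ := h2
  rcases le_total n m with h | h
  · right; exact ⟨m - n, by rw [← hn, ← Function.iterate_add_apply, Nat.sub_add_cancel h]; exact hm⟩
  · left; exact ⟨n - m, by rw [← hm, ← Function.iterate_add_apply, Nat.sub_add_cancel h]; exact hn⟩

lemma anc_root (v : V) : T.Anc T.root v := T.reach v

lemma depth_parent_lt {v : V} (hv : v ≠ T.root) : T.depth (T.parent v) < T.depth v := by
  have h0 : T.depth v ≠ 0 := by
    intro h
    exact hv (by simpa [h] using T.depth_spec v)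
  have : T.parent^[T.depth v - 1] (T.parent v) = T.root := by
    rw [← Function.iterate_succ_apply, Nat.succ_eq_add_one, Nat.sub_add_cancel (by omega)]
    exact T.depth_spec v
  have := T.depth_le this
  omega

lemma anc_depth_lt {u v : V} (h : T.Anc u v) (hne : u ≠ v) : T.depth u < T.depth v := by
  obtain ⟨n, hn⟩ := h
  induction n generalizing v with
  | zero => exact absurd hn.symm hne
  | succ n ih =>
    have hvroot : v ≠ T.root := by
      rintro rfl
      exact hne (by rw [← hn, T.iterate_root])
    rw [Function.iterate_succ_apply] at hn
    rcases eq_or_ne u (T.parent v) with h | h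
    · rw [h]; exact T.depth_parent_lt hvroot
    · exact lt_trans (ih h hn) (T.depth_parent_lt hvroot)

lemma anc_of_parent {w : V} : T.Anc (T.parent w) w := ⟨1, rfl⟩

lemma depth_lt_card [Fintype V] (v : V) : T.depth v < Fintype.card V := by
  have key : ∀ i j : Fin (T.depth v + 1), (i : ℕ) < (j : ℕ) →
      T.parent^[(i : ℕ)] v ≠ T.parent^[(j : ℕ)] v := by
    intro i j hlt hij
    have hfix : T.parent^[(j : ℕ) - i] (T.parent^[(i : ℕ)] v) = T.parent^[(i : ℕ)] v := by
      rw [← Function.iterate_add_apply, Nat.sub_add_cancel (le_of_lt hlt)]; exact hij.symm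
    have := T.eq_root_of_iterate_fixed hfix (by omega)
    have hd := T.depth_le (k := i) this
    have hj := j.2
    omega
  have hinj : Function.Injective (fun i : Fin (T.depth v + 1) => T.parent^[(i : ℕ)] v) := by
    intro i j hij
    simp only at hij
    by_contra hne
    rcases lt_or_gt_of_ne (fun h : (i : ℕ) = (j : ℕ) => hne (Fin.ext h)) with h | h
    · exact key i j h hij
    · exact key j i h hij.symm
  have := Fintype.card_le_of_injective _ hinj
  simpa using this

-- ### clade lemmas

lemma eq_leaf_of_anc_leaf {x : X} {v : V} (h : T.Anc (T.leaf x) v) : v = T.leaf x := by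
  obtain ⟨n, hn⟩ := h
  induction n generalizing v with
  | zero => exact hn
  | succ n ih =>
    rw [Function.iterate_succ_apply] at hn
    have := ih hn
    exact T.leaf_no_child x v this

lemma clade_leaf (x : X) : T.clade (T.leaf x) = {x} := by
  ext y
  simp only [clade, Set.mem_setOf_eq, Set.mem_singleton_iff]
  constructor
  · intro h
    exact T.leaf_inj (T.eq_leaf_of_anc_leaf h)
  · rintro rfl
    exact T.anc_refl _

lemma clade_mono {u v : V} (h : T.Anc u v) : T.clade v ⊆ T.clade u :=
  fun _ hx => T.anc_trans h hx

lemma clade_root : T.clade T.root = Set.univ :=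
  Set.eq_univ_of_forall fun x => T.anc_root _

lemma clade_nonempty [Fintype V] (v : V) : (T.clade v).Nonempty := by
  have main : ∀ (k : ℕ) (v : V), Fintype.card V ≤ T.depth v + k → (T.clade v).Nonempty := by
    intro k
    induction k with
    | zero =>
      intro v hv
      have := T.depth_lt_card v
      omega
    | succ k ih =>
      intro v hv
      by_cases hleaf : ∀ w : V, T.parent w = v → w = v
      · obtain ⟨x, hx⟩ := T.leaf_surj v hleaf
        exact ⟨x, by rw [← hx] at *; exact T.anc_refl _⟩
      · push_neg at hleaf
        obtain ⟨w, hw, hwv⟩ := hleaf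
        have hAnc : T.Anc v w := ⟨1, hw⟩
        have hd : T.depth v < T.depth w := T.anc_depth_lt hAnc (Ne.symm hwv)
        obtain ⟨x, hx⟩ := ih w (by omega)
        exact ⟨x, T.clade_mono hAnc hx⟩
  exact main (Fintype.card V) v (by omega)

lemma not_anc_sibling {u w w' : V} (hw : T.parent w = u) (hw' : T.parent w' = u)
    (hwu : w ≠ u) (hww' : w ≠ w') : ¬ T.Anc w w' := by
  rintro ⟨k, hk⟩
  rcases Nat.eq_zero_or_pos k with rfl | hkpos
  · exact hww' hk.symm
  · have hanc : T.Anc w u := by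
      refine ⟨k - 1, ?_⟩
      rw [show k = (k-1) + 1 by omega, Function.iterate_succ_apply, hw'] at hk
      exact hk
    exact hwu (T.anc_antisymm hanc ⟨1, hw⟩)

lemma siblings_disjoint {u w w' : V} (hw : T.parent w = u) (hw' : T.parent w' = u)
    (hwu : w ≠ u) (hw'u : w' ≠ u) (hww' : w ≠ w') : T.clade w ∩ T.clade w' = ∅ := by
  ext x
  simp only [Set.mem_inter_iff, Set.mem_empty_iff_false, iff_false, not_and]
  intro hx hx'
  rcases T.anc_total hx hx' with h | h
  · exact T.not_anc_sibling hw hw' hwu hww' h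
  · exact T.not_anc_sibling hw' hw hw'u (Ne.symm hww') h

lemma clade_ssubset [Fintype V] {u v : V} (h : T.Anc u v) (hne : u ≠ v) :
    T.clade v ⊂ T.clade u := by
  obtain ⟨n, hn⟩ := h
  have hex : ∃ m, T.parent^[m] v = u := ⟨n, hn⟩
  have hms : T.parent^[sInf {k | T.parent^[k] v = u}] v = u := Nat.sInf_mem hex
  generalize hmdef : sInf {k | T.parent^[k] v = u} = m at hms
  have hm0 : m ≠ 0 := by
    rintro rfl
    exact hne hms.symm
  have hwparent : T.parent (T.parent^[m - 1] v) = u := by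
    have h1 : T.parent^[m - 1 + 1] v = u := by
      rw [Nat.sub_add_cancel (by omega)]; exact hms
    rw [Function.iterate_succ_apply'] at h1
    exact h1
  have hwu : T.parent^[m - 1] v ≠ u := by
    intro hwu
    have : sInf {k | T.parent^[k] v = u} ≤ m - 1 := Nat.sInf_le hwu
    omega
  rcases T.internal_two u with hcase | hcase
  · rw [Set.eq_empty_iff_forall_notMem] at hcase
    exact absurd ⟨hwparent, hwu⟩ (hcase _)
  · obtain ⟨a, ha, b, hb, hab⟩ :=
      (Set.one_lt_ncard (s := {z | T.parent z = u ∧ z ≠ u}) (Set.toFinite _)).1 (by omega)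
    have hpick : ∃ w', T.parent w' = u ∧ w' ≠ u ∧ w' ≠ T.parent^[m - 1] v := by
      rcases eq_or_ne a (T.parent^[m - 1] v) with rfl | haw
      · exact ⟨b, hb.1, hb.2, fun hbw => hab (by rw [hbw])⟩
      · exact ⟨a, ha.1, ha.2, haw⟩
    obtain ⟨w', hw'p, hw'u, hw'w⟩ := hpick
    obtain ⟨y, hy⟩ := T.clade_nonempty w'
    constructor
    · exact T.clade_mono ⟨m, hms⟩
    · intro hsub
      have hyv : y ∈ T.clade v := hsub (T.clade_mono ⟨1, hw'p⟩ hy)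
      have hyw : y ∈ T.clade (T.parent^[m - 1] v) := T.clade_mono ⟨m - 1, rfl⟩ hyv
      have hdisj := T.siblings_disjoint hw'p hwparent hw'u hwu hw'w
      rw [Set.eq_empty_iff_forall_notMem] at hdisj
      exact hdisj y ⟨hy, hyw⟩

lemma clade_injective [Fintype V] {u v : V} (h : T.clade u = T.clade v) : u = v := by
  by_contra hne
  obtain ⟨x, hx⟩ := T.clade_nonempty u
  have hx' : x ∈ T.clade v := h ▸ hx
  rcases T.anc_total hx hx' with hanc | hanc
  · exact (T.clade_ssubset hanc hne).ne h.symm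
  · exact (T.clade_ssubset hanc (Ne.symm hne)).ne h

lemma eq_root_of_clade_univ [Fintype V] {v : V} (h : T.clade v = Set.univ) : v = T.root :=
  T.clade_injective (by rw [h, T.clade_root])

-- ### MRCA

lemma exists_isMRCA {S : Set V} {v₀ : V} (h : v₀ ∈ S) : ∃ m, T.IsMRCA S m := by
  have hex : ∃ n, ∀ v ∈ S, T.Anc (T.parent^[n] v₀) v := by
    obtain ⟨N, hN⟩ := T.reach v₀
    exact ⟨N, fun v _ => hN ▸ T.anc_root v⟩
  have hspec := Nat.sInf_mem hex
  set n₀ := sInf {n | ∀ v ∈ S, T.Anc (T.parent^[n] v₀) v} with hn₀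
  refine ⟨T.parent^[n₀] v₀, hspec, ?_⟩
  intro a ha
  obtain ⟨k, hk⟩ := ha v₀ h
  have hkn : n₀ ≤ k := by
    by_contra hlt
    push_neg at hlt
    have : sInf {n | ∀ v ∈ S, T.Anc (T.parent^[n] v₀) v} ≤ k :=
      Nat.sInf_le (fun v hv => hk ▸ ha v hv)
    omega
  exact ⟨k - n₀, by rw [← Function.iterate_add_apply, Nat.sub_add_cancel hkn]; exact hk⟩

lemma isMRCA_unique {S : Set V} {m m' : V} (h : T.IsMRCA S m) (h' : T.IsMRCA S m') :
    m = m' :=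
  T.anc_antisymm (h'.2 m h.1) (h.2 m' h'.1)

lemma mem_clade_of_isMRCA {S : Set V} {m : V} (h : T.IsMRCA S m) {x : X}
    (hx : T.leaf x ∈ S) : x ∈ T.clade m := h.1 _ hx

-- forward: clades force triples
lemma displaysTriple_of_clade {v : V} {a b c : X} (ha : a ∈ T.clade v) (hb : b ∈ T.clade v)
    (hc : c ∉ T.clade v) : T.DisplaysTriple a b c := by
  obtain ⟨m₁, hm₁⟩ := T.exists_isMRCA (S := {T.leaf a, T.leaf b}) (Set.mem_insert _ _)
  obtain ⟨m₂, hm₂⟩ := T.exists_isMRCA (S := {T.leaf a, T.leaf b, T.leaf c}) (Set.mem_insert _ _)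
  have hvm₁ : T.Anc v m₁ := hm₁.2 v (by rintro w (rfl | rfl); exacts [ha, hb])
  have hcm₁ : c ∉ T.clade m₁ := fun hmem => hc (T.clade_mono hvm₁ hmem)
  have hcm₂ : c ∈ T.clade m₂ := hm₂.1 _ (by right; right; rfl)
  refine ⟨m₁, m₂, hm₁, hm₂, fun he => hcm₁ (he ▸ hcm₂), ?_⟩
  refine hm₁.2 m₂ ?_
  rintro w (rfl | rfl)
  · exact hm₂.1 _ (by left; rfl)
  · exact hm₂.1 _ (by right; left; rfl)

-- converse: triples force clades
lemma exists_clade_of_triples [Fintype X] [Fintype V] {C : Set X} {a b : X}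
    (ha : a ∈ C) (hb : b ∈ C) (hab : a ≠ b)
    (h2 : ∀ a' ∈ C, ∀ b' ∈ C, a' ≠ b' → ∀ c ∉ C, T.DisplaysTriple a' b' c) :
    ∃ v, T.clade v = C := by
  have hmb : ∀ b' : X, ∃ m, T.IsMRCA {T.leaf a, T.leaf b'} m :=
    fun b' => T.exists_isMRCA (Set.mem_insert _ _)
  choose mb hmbspec using hmb
  have hanca : ∀ b', T.Anc (mb b') (T.leaf a) := fun b' => (hmbspec b').1 _ (by left; rfl)
  obtain ⟨b₀, hb₀mem, hb₀min⟩ := Set.exists_min_image (C \ {a}) (fun b' => T.depth (mb b'))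
    (Set.toFinite _) ⟨b, hb, by simpa using Ne.symm hab⟩
  have hb₀C : b₀ ∈ C := hb₀mem.1
  have hb₀a : b₀ ≠ a := by simpa using hb₀mem.2
  have hcomp : ∀ b' ∈ C \ {a}, T.Anc (mb b₀) (mb b') := by
    intro b' hb'
    rcases T.anc_total (hanca b₀) (hanca b') with hanc | hanc
    · exact hanc
    · rcases eq_or_ne (mb b') (mb b₀) with he | hne
      · rw [he]; exact T.anc_refl _
      · have := T.anc_depth_lt hanc hne
        have := hb₀min b' hb'
        omega
  have hMRCA : T.IsMRCA (T.leaf '' C) (mb b₀) := by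
    constructor
    · rintro v ⟨c', hc', rfl⟩
      rcases eq_or_ne c' a with rfl | hca
      · exact hanca b₀
      · exact T.anc_trans (hcomp c' ⟨hc', by simpa using hca⟩)
          ((hmbspec c').1 _ (by right; rfl))
    · intro a' ha'
      refine (hmbspec b₀).2 a' ?_
      rintro w (rfl | rfl)
      · exact ha' _ ⟨a, ha, rfl⟩
      · exact ha' _ ⟨b₀, hb₀C, rfl⟩
  refine ⟨mb b₀, ?_⟩
  ext c
  constructor
  · intro hc
    by_contra hcC
    obtain ⟨m₁, m₂, hm₁, hm₂, hne, -⟩ := h2 a ha b₀ hb₀C (Ne.symm hb₀a) c hcC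
    have e₁ : m₁ = mb b₀ := T.isMRCA_unique hm₁ (hmbspec b₀)
    have htriple : T.IsMRCA {T.leaf a, T.leaf b₀, T.leaf c} (mb b₀) := by
      constructor
      · rintro w (rfl | rfl | rfl)
        · exact hanca b₀
        · exact (hmbspec b₀).1 _ (by right; rfl)
        · exact hc
      · intro a' ha'
        refine (hmbspec b₀).2 a' ?_
        rintro w (rfl | rfl)
        · exact ha' _ (by left; rfl)
        · exact ha' _ (by right; left; rfl)
    have e₂ : m₂ = mb b₀ := T.isMRCA_unique hm₂ htriple
    exact hne (e₁.trans e₂.symm)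
  · intro hc
    exact hMRCA.1 _ ⟨c, hc, rfl⟩

lemma parent_clade_subset [Fintype V] {u v : V} (h : T.clade v ⊂ T.clade u) :
    T.clade (T.parent v) ⊆ T.clade u := by
  obtain ⟨x, hx⟩ := T.clade_nonempty v
  have hxu : x ∈ T.clade u := h.1 hx
  have hanc : T.Anc u v := by
    rcases T.anc_total hxu hx with h' | h'
    · exact h'
    · exact absurd (T.clade_mono h') h.not_subset
  obtain ⟨n, hn⟩ := hanc
  have hn0 : n ≠ 0 := by
    rintro rfl
    exact h.ne (by rw [← hn]; rfl)
  refine T.clade_mono ⟨n - 1, ?_⟩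
  have h1 : T.parent^[n - 1 + 1] v = u := by rw [Nat.sub_add_cancel (by omega)]; exact hn
  rw [Function.iterate_succ_apply] at h1
  exact h1

lemma transfer {X V₁ V₂ : Type*} [Fintype X] [Fintype V₁] [Fintype V₂]
    (T₁ : RPhylo X V₁) (T₂ : RPhylo X V₂)
    (h : ∀ a b c : X, a ≠ b → a ≠ c → b ≠ c →
      T₁.DisplaysTriple a b c → T₂.DisplaysTriple a b c) (v₁ : V₁) :
    ∃ v₂ : V₂, T₂.clade v₂ = T₁.clade v₁ := by
  obtain ⟨x, hx⟩ := T₁.clade_nonempty v₁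
  by_cases hpair : ∃ a ∈ T₁.clade v₁, ∃ b ∈ T₁.clade v₁, a ≠ b
  · obtain ⟨a, ha, b, hb, hab⟩ := hpair
    refine T₂.exists_clade_of_triples ha hb hab ?_
    intro a' ha' b' hb' hab' c hc
    exact h a' b' c hab' (fun he => hc (he ▸ ha')) (fun he => hc (he ▸ hb'))
      (T₁.displaysTriple_of_clade ha' hb' hc)
  · push_neg at hpair
    refine ⟨T₂.leaf x, ?_⟩
    rw [T₂.clade_leaf]
    ext y
    simp only [Set.mem_singleton_iff]
    constructor
    · intro hy; rw [hy]; exact hx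
    · intro hy; exact (hpair x hx y hy).symm

theorem main {X V₁ V₂ : Type*} [Fintype X] [Fintype V₁] [Fintype V₂]
    (T₁ : RPhylo X V₁) (T₂ : RPhylo X V₂)
    (h : ∀ a b c : X, a ≠ b → a ≠ c → b ≠ c →
      (T₁.DisplaysTriple a b c ↔ T₂.DisplaysTriple a b c)) :
    ∃ f : V₁ ≃ V₂, f T₁.root = T₂.root ∧
      (∀ v : V₁, f (T₁.parent v) = T₂.parent (f v)) ∧
      (∀ x : X, f (T₁.leaf x) = T₂.leaf x) := by
  have hf' := transfer T₁ T₂ (fun a b c hab hac hbc => (h a b c hab hac hbc).mp)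
  have hg' := transfer T₂ T₁ (fun a b c hab hac hbc => (h a b c hab hac hbc).mpr)
  choose f hf using hf'
  choose g hg using hg'
  have hgf : ∀ v, g (f v) = v := fun v => T₁.clade_injective (by rw [hg, hf])
  have hfg : ∀ w, f (g w) = w := fun w => T₂.clade_injective (by rw [hf, hg])
  refine ⟨⟨f, g, hgf, hfg⟩, ?_, ?_, ?_⟩
  · simp only [Equiv.coe_fn_mk]
    exact T₂.eq_root_of_clade_univ (by rw [hf, T₁.clade_root])
  · intro v
    simp only [Equiv.coe_fn_mk]
    rcases eq_or_ne v T₁.root with rfl | hv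
    · have hroot : f T₁.root = T₂.root := T₂.eq_root_of_clade_univ (by rw [hf, T₁.clade_root])
      rw [T₁.parent_root, hroot, T₂.parent_root]
    · have hpv : T₁.parent v ≠ v := fun he => hv (T₁.eq_root_of_parent_fixed he)
      have hCD : T₁.clade v ⊂ T₁.clade (T₁.parent v) :=
        T₁.clade_ssubset T₁.anc_of_parent hpv
      have hfv : f v ≠ T₂.root := by
        intro he
        refine hv (T₁.eq_root_of_clade_univ ?_)
        rw [← hf v, he, T₂.clade_root]
      have hpfv : T₂.parent (f v) ≠ f v := fun he => hfv (T₂.eq_root_of_parent_fixed he)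
      have hCD' : T₂.clade (f v) ⊂ T₂.clade (T₂.parent (f v)) :=
        T₂.clade_ssubset T₂.anc_of_parent hpfv
      have h1 : T₂.clade (f v) ⊂ T₂.clade (f (T₁.parent v)) := by
        rw [hf, hf]; exact hCD
      have hD'D := T₂.parent_clade_subset h1
      have h2 : T₁.clade v ⊂ T₁.clade (g (T₂.parent (f v))) := by
        rw [hg, ← hf v]; exact hCD'
      have hDD' := T₁.parent_clade_subset h2
      rw [hg] at hDD'
      refine T₂.clade_injective ?_
      refine Set.Subset.antisymm ?_ hD'D
      rw [hf]
      exact hDD'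
  · intro x
    simp only [Equiv.coe_fn_mk]
    refine T₂.clade_injective ?_
    rw [hf, T₁.clade_leaf, T₂.clade_leaf]

end RPhylo

/-- **Theorem.** Two rooted binary phylogenetic trees on the same taxon set `X` (with
`|X| ≥ 3`) displaying exactly the same set of rooted triples are isomorphic as
leaf-labeled rooted trees: there is a bijection of their vertex sets carrying root to
root, commuting with the parent maps, and commuting with the leaf labelings. -/
theorem rooted_triples_determine_tree
    {X V₁ V₂ : Type*} [Fintype X] [Fintype V₁] [Fintype V₂]
    (h3 : 3 ≤ Fintype.card X)
    (T₁ : RPhylo X V₁) (T₂ : RPhylo X V₂)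
    (hbin₁ : T₁.IsBinary) (hbin₂ : T₂.IsBinary)
    (h : ∀ a b c : X, a ≠ b → a ≠ c → b ≠ c →
      (T₁.DisplaysTriple a b c ↔ T₂.DisplaysTriple a b c)) :
    ∃ f : V₁ ≃ V₂, f T₁.root = T₂.root ∧
      (∀ v : V₁, f (T₁.parent v) = T₂.parent (f v)) ∧
      (∀ x : X, f (T₁.leaf x) = T₂.leaf x) :=
  RPhylo.main T₁ T₂ h
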